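/- Let n ∈ ℕ and r, r' ∈ {0,…,n} with r + 3 ≤ r'. For any two distinct vertices A, B ∈ L_r ∪ L_{r'}, there exists a shortest A,B-path in Q_n whose internal vertices all lie in layers L_j with r < j < r' (in particular, the path is internally disjoint from L_r ∪ L_{r'}). -/

import Mathlib

/-- The `n`-dimensional hypercube: vertices are subsets of `{1,…,n}` (modeled as
`Finset (Fin n)`), with `A` and `B` adjacent iff their symmetric difference has size 1. -/
def hypercube (n : ℕ) : SimpleGraph (Finset (Fin n)) where
  Adj A B := (symmDiff A B).card = 1
  symm := ⟨fun A B h => by simpa only [symmDiff_comm] using h⟩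
  loopless := ⟨fun A h => by simp [symmDiff_self] at h⟩

/-- `u` and `v` are `M`-visible in `G`: there is a shortest `u,v`-path containing
no vertex of `M` as an internal vertex. -/
def IsVisiblePair {V : Type*} (G : SimpleGraph V) (M : Set V) (u v : V) : Prop :=
  ∃ p : G.Walk u v, p.IsPath ∧ p.length = G.dist u v ∧
    ∀ x ∈ p.support, x ∈ M → x = u ∨ x = v

/-- `M` is a mutual-visibility set in `G`. -/
def IsMutualVisibilitySet {V : Type*} (G : SimpleGraph V) (M : Set V) : Prop :=
  ∀ u ∈ M, ∀ v ∈ M, IsVisiblePair G M u v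

/-- `M` is a total mutual-visibility set in `G`. -/
def IsTotalMutualVisibilitySet {V : Type*} (G : SimpleGraph V) (M : Set V) : Prop :=
  ∀ u v : V, IsVisiblePair G M u v

/-- The mutual-visibility number `μ(Q_n)`. -/
noncomputable def mu (n : ℕ) : ℕ :=
  sSup {k | ∃ M : Set (Finset (Fin n)), IsMutualVisibilitySet (hypercube n) M ∧ M.ncard = k}

/-- The total mutual-visibility number `μ_t(Q_n)`. -/
noncomputable def muTotal (n : ℕ) : ℕ :=
  sSup {k | ∃ M : Set (Finset (Fin n)), IsTotalMutualVisibilitySet (hypercube n) M ∧ M.ncard = k}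

/-- The chromatic mutual-visibility number `χ_μ(Q_n)`: the least number of colors in a
vertex-coloring of `Q_n` in which every color class is a mutual-visibility set. -/
noncomputable def chiMu (n : ℕ) : ℕ :=
  sInf {k | ∃ c : Finset (Fin n) → Fin k, ∀ i : Fin k,
    IsMutualVisibilitySet (hypercube n) {A | c A = i}}

/-- The total chromatic mutual-visibility number `χ_μ^total(Q_n)`. -/
noncomputable def chiMuTotal (n : ℕ) : ℕ :=
  sInf {k | ∃ c : Finset (Fin n) → Fin k, ∀ i : Fin k,
    IsTotalMutualVisibilitySet (hypercube n) {A | c A = i}}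

/-- A family `F` of `r`-element subsets of `[n]` contains an `(r,s,t)`-daisy if there are
`A ⊆ B` with `|A| = r - t` and `|B| = r + s - t` such that every `r`-set `T` with
`A ⊆ T ⊆ B` belongs to `F`. -/
def ContainsDaisy (n r s t : ℕ) (F : Finset (Finset (Fin n))) : Prop :=
  ∃ A B : Finset (Fin n), A ⊆ B ∧ A.card = r - t ∧ B.card = r + s - t ∧
    ∀ T : Finset (Fin n), A ⊆ T → T ⊆ B → T.card = r → T ∈ F

/-- The Turán number `ex(n, D_r(s,t))`: the largest size of a family of `r`-element
subsets of `[n]` containing no `(r,s,t)`-daisy. -/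
noncomputable def daisyTuran (n r s t : ℕ) : ℕ :=
  sSup {k | ∃ F : Finset (Finset (Fin n)), (∀ T ∈ F, T.card = r) ∧
    ¬ ContainsDaisy n r s t F ∧ F.card = k}

/-!
A geodesic of `Q_n` from `A` to `B` toggles each element of `A ∆ B` exactly once, changing the
layer by `±1` at each step. Inside a band of at least two consecutive layers one can always toggle
some element of `A ∆ B` without leaving the band, so any two sets of the band are joined by a
geodesic inside it. Since `r' - r ≥ 3`, there are distinct `x, y ∈ A ∆ B` such that `A ∆ {x}` and
`B ∆ {y}` lie in the band of layers `r + 1, …, r' - 1`; joining them there and adding the two end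
edges gives the required geodesic.
-/

open Finset SimpleGraph
open scoped symmDiff

namespace Finset

variable {α : Type*} [DecidableEq α] {s t : Finset α} {a b : α}

lemma symmDiff_singleton_of_mem (h : a ∈ s) : s ∆ {a} = s.erase a := by
  ext c
  by_cases hc : c = a <;> simp [mem_symmDiff, hc, h]

lemma symmDiff_singleton_of_notMem (h : a ∉ s) : s ∆ {a} = insert a s := by
  ext c
  by_cases hc : c = a <;> simp [mem_symmDiff, hc, h]

lemma card_symmDiff_singleton_of_mem (h : a ∈ s) : #(s ∆ {a}) + 1 = #s := by
  rw [symmDiff_singleton_of_mem h, card_erase_add_one h]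

lemma card_symmDiff_singleton_of_notMem (h : a ∉ s) : #(s ∆ {a}) = #s + 1 := by
  rw [symmDiff_singleton_of_notMem h, card_insert_of_notMem h]

lemma card_symmDiff_singleton_symmDiff_add_one (ha : a ∈ s ∆ t) :
    #((s ∆ {a}) ∆ t) + 1 = #(s ∆ t) := by
  rw [symmDiff_right_comm, card_symmDiff_singleton_of_mem ha]

lemma card_symmDiff_singleton_symmDiff_symmDiff_singleton_add_two (ha : a ∈ s ∆ t)
    (hb : b ∈ s ∆ t) (hab : a ≠ b) : #((s ∆ {a}) ∆ (t ∆ {b})) + 2 = #(s ∆ t) := by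
  rw [symmDiff_symmDiff_symmDiff_comm, ← symmDiff_assoc, symmDiff_singleton_of_mem ha,
    ← card_erase_add_one ha, ← card_symmDiff_singleton_of_mem (mem_erase.2 ⟨hab.symm, hb⟩)]

end Finset

variable {n : ℕ}

lemma hypercube_adj_symmDiff_singleton (A : Finset (Fin n)) (x : Fin n) :
    (hypercube n).Adj A (A ∆ {x}) := by
  change #(A ∆ (A ∆ {x})) = 1
  rw [symmDiff_symmDiff_cancel_left, card_singleton]

lemma card_symmDiff_le_length {A B : Finset (Fin n)} (w : (hypercube n).Walk A B) :
    #(A ∆ B) ≤ w.length := by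
  induction w with
  | nil => simp
  | @cons A C B hAC w ih =>
    calc #(A ∆ B) ≤ #(A ∆ C ∪ C ∆ B) := card_le_card (symmDiff_triangle A C B)
      _ ≤ #(A ∆ C) + #(C ∆ B) := card_union_le _ _
      _ ≤ (Walk.cons hAC w).length := by
        rw [Walk.length_cons, show #(A ∆ C) = 1 from hAC]
        omega

lemma exists_mem_symmDiff_card_symmDiff_singleton_mem_Icc {lo hi : ℕ} (hlohi : lo < hi)
    {A B : Finset (Fin n)} (hA : #A ∈ Icc lo hi) (hB : #B ∈ Icc lo hi) (hAB : A ≠ B) :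
    ∃ x ∈ A ∆ B, #(A ∆ {x}) ∈ Icc lo hi := by
  simp only [mem_Icc] at hA hB ⊢
  by_cases hBA : B ⊆ A
  · have hBA' : B ⊂ A := hBA.ssubset_of_ne hAB.symm
    obtain ⟨x, hxA, hxB⟩ := exists_of_ssubset hBA'
    have := card_lt_card hBA'
    have := card_symmDiff_singleton_of_mem hxA
    exact ⟨x, mem_symmDiff.2 (.inl ⟨hxA, hxB⟩), by omega⟩
  obtain ⟨x, hxB, hxA⟩ := not_subset.1 hBA
  by_cases hAhi : #A < hi
  · have := card_symmDiff_singleton_of_notMem hxA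
    exact ⟨x, mem_symmDiff.2 (.inr ⟨hxB, hxA⟩), by omega⟩
  have hAB' : ¬ A ⊆ B := fun hAB' ↦ by
    have := card_lt_card (Finset.ssubset_iff_subset_ne.2 ⟨hAB', fun h ↦ hxA (h ▸ hxB)⟩)
    omega
  obtain ⟨y, hyA, hyB⟩ := not_subset.1 hAB'
  have := card_symmDiff_singleton_of_mem hyA
  exact ⟨y, mem_symmDiff.2 (.inl ⟨hyA, hyB⟩), by omega⟩

theorem exists_walk_length_eq_card_symmDiff_of_card_mem_Icc {lo hi : ℕ} (hlohi : lo < hi)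
    {A B : Finset (Fin n)} (hA : #A ∈ Icc lo hi) (hB : #B ∈ Icc lo hi) :
    ∃ w : (hypercube n).Walk A B, w.length = #(A ∆ B) ∧ ∀ X ∈ w.support, #X ∈ Icc lo hi := by
  induction hN : #(A ∆ B) generalizing A with
  | zero =>
    obtain rfl : A = B := symmDiff_eq_bot.1 (card_eq_zero.1 hN)
    exact ⟨.nil, rfl, by simpa using hA⟩
  | succ N ih =>
    have hAB : A ≠ B := by
      rintro rfl
      simp at hN
    obtain ⟨x, hx, hAx⟩ := exists_mem_symmDiff_card_symmDiff_singleton_mem_Icc hlohi hA hB hAB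
    have hN' : #((A ∆ {x}) ∆ B) = N := by
      have := card_symmDiff_singleton_symmDiff_add_one hx
      omega
    obtain ⟨w, hw, hwX⟩ := ih hAx hN'
    refine ⟨.cons (hypercube_adj_symmDiff_singleton A x) w, by rw [Walk.length_cons, hw], ?_⟩
    simpa only [Walk.support_cons, List.forall_mem_cons] using ⟨hA, hwX⟩

theorem hypercube_dist (A B : Finset (Fin n)) : (hypercube n).dist A B = #(A ∆ B) := by
  have hcard (X : Finset (Fin n)) : #X ∈ Icc 0 (n + 1) := by
    simpa using (card_le_univ X).trans (by simp)
  obtain ⟨w, hw, -⟩ :=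
    exists_walk_length_eq_card_symmDiff_of_card_mem_Icc n.succ_pos (hcard A) (hcard B)
  obtain ⟨p, hp⟩ := Reachable.exists_walk_length_eq_dist ⟨w⟩
  exact le_antisymm (hw ▸ dist_le w) (hp ▸ card_symmDiff_le_length p)

lemma exists_ne_mem_symmDiff_steps_between_layers {r r' : ℕ} (hrr' : r + 3 ≤ r') {A B : Finset (Fin n)} (hAB : A ≠ B)
    (hA : #A = r ∨ #A = r') (hB : #B = r ∨ #B = r') :
    ∃ x ∈ A ∆ B, ∃ y ∈ A ∆ B, x ≠ y ∧
      #(A ∆ {x}) ∈ Icc (r + 1) (r' - 1) ∧ #(B ∆ {y}) ∈ Icc (r + 1) (r' - 1) := by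
  wlog hle : #A ≤ #B generalizing A B
  · obtain ⟨y, hy, x, hx, hyx, hBy, hAx⟩ := this hAB.symm hB hA (by omega)
    rw [symmDiff_comm] at hx hy
    exact ⟨x, hx, y, hy, hyx.symm, hAx, hBy⟩
  have hsdiff : #(B \ A) + #A = #(A \ B) + #B := by
    rw [card_sdiff_add_card, card_sdiff_add_card, union_comm]
  simp only [mem_Icc, mem_symmDiff]
  obtain ⟨b, hb⟩ : (B \ A).Nonempty :=
    sdiff_nonempty.2 fun h ↦ hAB (eq_of_subset_of_card_le h hle).symm
  rw [mem_sdiff] at hb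
  rcases hA with hA | hA <;> rcases hB with hB | hB
  · obtain ⟨a, ha⟩ : (A \ B).Nonempty :=
      sdiff_nonempty.2 fun h ↦ hAB (eq_of_subset_of_card_le h (by omega))
    rw [mem_sdiff] at ha
    have := card_symmDiff_singleton_of_notMem hb.2
    have := card_symmDiff_singleton_of_notMem ha.2
    exact ⟨b, .inr hb, a, .inl ha, fun h ↦ hb.2 (h ▸ ha.1), by omega, by omega⟩
  · obtain ⟨b', hb', hb'b⟩ := exists_mem_ne (s := B \ A) (by omega) b
    rw [mem_sdiff] at hb'
    have := card_symmDiff_singleton_of_notMem hb.2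
    have := card_symmDiff_singleton_of_mem hb'.1
    exact ⟨b, .inr hb, b', .inr hb', hb'b.symm, by omega, by omega⟩
  · omega
  · obtain ⟨a, ha⟩ : (A \ B).Nonempty :=
      sdiff_nonempty.2 fun h ↦ hAB (eq_of_subset_of_card_le h (by omega))
    rw [mem_sdiff] at ha
    have := card_symmDiff_singleton_of_mem ha.1
    have := card_symmDiff_singleton_of_mem hb.1
    exact ⟨a, .inl ha, b, .inr hb, fun h ↦ hb.2 (h ▸ ha.1), by omega, by omega⟩

theorem exists_shortestPath_between_layers_general (n r r' : ℕ) (hrr' : r + 3 ≤ r')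
    (A B : Finset (Fin n)) (hAB : A ≠ B)
    (hA : A.card = r ∨ A.card = r') (hB : B.card = r ∨ B.card = r') :
    ∃ p : (hypercube n).Walk A B, p.IsPath ∧ p.length = (hypercube n).dist A B ∧
      ∀ x ∈ p.support, x ≠ A → x ≠ B → r < x.card ∧ x.card < r' := by
  obtain ⟨x, hx, y, hy, hxy, hAx, hBy⟩ := exists_ne_mem_symmDiff_steps_between_layers hrr' hAB hA hB
  obtain ⟨w, hw, hwX⟩ :=
    exists_walk_length_eq_card_symmDiff_of_card_mem_Icc (by omega : r + 1 < r' - 1) hAx hBy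
  let p : (hypercube n).Walk A B := .cons (hypercube_adj_symmDiff_singleton A x)
    (w.concat (hypercube_adj_symmDiff_singleton B y).symm)
  have hp : p.length = (hypercube n).dist A B := by
    rw [hypercube_dist, ← card_symmDiff_singleton_symmDiff_symmDiff_singleton_add_two hx hy hxy,
      ← hw]
    simp [p]
  refine ⟨p, p.isPath_of_length_eq_dist hp, hp, fun X hX hXA hXB ↦ ?_⟩
  have hXw : X ∈ w.support := by simpa [p, Walk.support_concat, hXA, hXB] using hX
  have := mem_Icc.1 (hwX X hXw)
  omega

/-- **Claim 1.** Let `r + 3 ≤ r' ≤ n`. For any two distinct vertices `A, B ∈ L_r ∪ L_{r'}`,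
there is a shortest `A,B`-path in `Q_n` all of whose internal vertices lie in layers
strictly between `L_r` and `L_{r'}`. -/
theorem exists_shortestPath_between_layers (n r r' : ℕ) (hrr' : r + 3 ≤ r') (hn : r' ≤ n)
    (A B : Finset (Fin n)) (hAB : A ≠ B)
    (hA : A.card = r ∨ A.card = r') (hB : B.card = r ∨ B.card = r') :
    ∃ p : (hypercube n).Walk A B, p.IsPath ∧ p.length = (hypercube n).dist A B ∧
      ∀ x ∈ p.support, x ≠ A → x ≠ B → r < x.card ∧ x.card < r' :=
  exists_shortestPath_between_layers_general n r r' hrr' A B hAB hA hB
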